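/- arXiv:math/0409080 — 2 statements merged into one kernel-verified Lean document; each statement's English description precedes it below -/
import Mathlib

section
/- Let M and N be matroids with finite disjoint ground sets S and T. Then the dual of the free product equals the free product of the duals in reverse order: (M □ N)* = N* □ M*, where M* and N* denote the dual matroids of M and N. -/
/-!
Coindependence of `I` in `L = M □ N` means that the complement `L.E \ I` spans `L`. The rank
function of a free product is `r(X) = min (r_M(X ∩ S) + |X ∩ T|) (r(M) + r_N(X ∩ T))`, so `X`
spans `L` iff `X ∩ T` spans `N` and `r(M) + r(N) ≤ r_M(X ∩ S) + |X ∩ T|`. For `X = L.E \ I` the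
first condition says that `I ∩ T` is independent in `N✶`, and by the dual rank formula
`r_{M✶}(Y) + r(M) = r_M(S \ Y) + |Y|` the second is the rank inequality defining
independence of `I` in `N✶ □ M✶`.
-/

open Set Matroid

/-- The rank of a set `X` in a matroid `M`: the maximum cardinality of an
independent subset of `X`.  For `X = M.E` this is the rank of `M`. -/
noncomputable def mrk {α : Type*} (M : Matroid α) (X : Set α) : ℕ :=
  sSup (Set.ncard '' {I | M.Indep I ∧ I ⊆ X})

namespace Matroid

variable {α : Type*} {M : Matroid α} {I X Y : Set α}

lemma IsBasis'.ncard_eq_mrk [M.RankFinite] (hI : M.IsBasis' I X) : I.ncard = mrk M X := by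
  have hle : ∀ J ∈ {J | M.Indep J ∧ J ⊆ X}, J.ncard ≤ I.ncard := by
    rintro J ⟨hJ, hJX⟩
    have h := hJ.encard_le_eRk_of_subset hJX
    rw [hI.eRk_eq_encard, ← hJ.finite.cast_ncard_eq, ← hI.indep.finite.cast_ncard_eq] at h
    exact_mod_cast h
  have hbdd : I.ncard ∈ upperBounds (ncard '' {J | M.Indep J ∧ J ⊆ X}) := forall_mem_image.2 hle
  exact le_antisymm (le_csSup ⟨_, hbdd⟩ ⟨I, ⟨hI.indep, hI.subset⟩, rfl⟩)
    (csSup_le ⟨_, I, ⟨hI.indep, hI.subset⟩, rfl⟩ hbdd)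

lemma cast_mrk [M.RankFinite] (X : Set α) : (mrk M X : ℕ∞) = M.eRk X := by
  obtain ⟨I, hI⟩ := M.exists_isBasis' X
  rw [← hI.ncard_eq_mrk, hI.indep.finite.cast_ncard_eq, hI.eRk_eq_encard]

lemma mrk_mono [M.RankFinite] (hXY : X ⊆ Y) : mrk M X ≤ mrk M Y := by
  have h := M.eRk_mono hXY
  rwa [← cast_mrk, ← cast_mrk, Nat.cast_le] at h

lemma mrk_le_mrk_ground [M.RankFinite] (X : Set α) : mrk M X ≤ mrk M M.E := by
  have h := M.eRk_le_eRank X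
  rwa [eRank_def, ← cast_mrk, ← cast_mrk, Nat.cast_le] at h

lemma mrk_le_ncard [M.RankFinite] (hX : X.Finite) : mrk M X ≤ X.ncard := by
  have h := M.eRk_le_encard X
  rwa [← cast_mrk, ← hX.cast_ncard_eq, Nat.cast_le] at h

lemma Indep.ncard_le_mrk [M.RankFinite] (hI : M.Indep I) (hIX : I ⊆ X) : I.ncard ≤ mrk M X := by
  have h := hI.encard_le_eRk_of_subset hIX
  rwa [← cast_mrk, ← hI.finite.cast_ncard_eq, Nat.cast_le] at h

lemma Indep.mrk_eq_ncard [M.RankFinite] (hI : M.Indep I) : mrk M I = I.ncard :=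
  hI.isBasis_self.isBasis'.ncard_eq_mrk.symm

@[simp] lemma mrk_empty [M.RankFinite] : mrk M ∅ = 0 := by
  simpa using M.empty_indep.mrk_eq_ncard

lemma spanning_iff_mrk_eq [M.RankFinite] (hX : X ⊆ M.E) : M.Spanning X ↔ mrk M X = mrk M M.E := by
  rw [spanning_iff_eRk_le', eRank_def, ← cast_mrk, ← cast_mrk, Nat.cast_le, and_iff_left hX]
  exact ⟨fun h ↦ le_antisymm (mrk_le_mrk_ground X) h, fun h ↦ h.ge⟩

lemma mrk_dual_add_mrk_ground [M.Finite] (hX : X ⊆ M.E) :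
    mrk M✶ X + mrk M M.E = mrk M (M.E \ X) + X.ncard := by
  have h := M.eRk_dual_add_eRank X hX
  rw [eRank_def, ← cast_mrk, ← cast_mrk, ← cast_mrk,
    ← (M.ground_finite.subset hX).cast_ncard_eq] at h
  exact_mod_cast h

/-- `M □ N`, with `S = M.E` and `T = N.E`: the last condition is `ν_N(A ∩ T) ≤ λ_M(A ∩ S)`. -/
def IsFreeProduct (L M N : Matroid α) : Prop :=
  L.E = M.E ∪ N.E ∧ ∀ A, L.Indep A ↔ A ⊆ M.E ∪ N.E ∧ M.Indep (A ∩ M.E) ∧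
    (A ∩ N.E).ncard - mrk N (A ∩ N.E) ≤ mrk M M.E - mrk M (A ∩ M.E)

namespace IsFreeProduct

variable {L L' N : Matroid α}

lemma indep_iff [M.RankFinite] (hL : L.IsFreeProduct M N) {A : Set α} :
    L.Indep A ↔ A ⊆ L.E ∧ M.Indep (A ∩ M.E) ∧
      (A ∩ N.E).ncard + mrk M (A ∩ M.E) ≤ mrk M M.E + mrk N (A ∩ N.E) := by
  rw [hL.2, hL.1]
  refine and_congr_right fun _ ↦ ⟨fun ⟨hA, h⟩ ↦ ⟨hA, ?_⟩, fun ⟨hA, h⟩ ↦ ⟨hA, by omega⟩⟩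
  have := mrk_le_mrk_ground (M := M) (A ∩ M.E)
  omega

variable [M.Finite] [N.Finite]

lemma finite (hL : L.IsFreeProduct M N) : L.Finite :=
  ⟨hL.1 ▸ M.ground_finite.union N.ground_finite⟩

lemma ncard_eq_ncard_inter_add_ncard_inter (hL : L.IsFreeProduct M N) (hMN : Disjoint M.E N.E)
    {A : Set α} (hA : A ⊆ L.E) : A.ncard = (A ∩ M.E).ncard + (A ∩ N.E).ncard := by
  have hAfin : A.Finite := hL.finite.ground_finite.subset hA
  rw [← ncard_inter_add_ncard_sdiff_eq_ncard A M.E hAfin]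
  congr 2
  rw [hL.1] at hA
  tauto_set

lemma mrk_eq (hL : L.IsFreeProduct M N) (hMN : Disjoint M.E N.E) (X : Set α) :
    mrk L X = min (mrk M (X ∩ M.E) + (X ∩ N.E).ncard) (mrk M M.E + mrk N (X ∩ N.E)) := by
  have := hL.finite
  have hXN : (X ∩ N.E).Finite := N.ground_finite.subset inter_subset_right
  refine le_antisymm ?_ ?_
  · obtain ⟨A, hA⟩ := L.exists_isBasis' X
    obtain ⟨hAE, hAM, hAcard⟩ := hL.indep_iff.1 hA.indep
    have hSM := mrk_mono (M := M) (inter_subset_inter_left M.E hA.subset)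
    have hTN := mrk_mono (M := N) (inter_subset_inter_left N.E hA.subset)
    have hT := ncard_le_ncard (inter_subset_inter_left N.E hA.subset) hXN
    rw [← hA.ncard_eq_mrk, hL.ncard_eq_ncard_inter_add_ncard_inter hMN hAE, ← hAM.mrk_eq_ncard]
    omega
  · obtain ⟨I, hI⟩ := M.exists_isBasis' (X ∩ M.E)
    obtain ⟨J, hJ⟩ := N.exists_isBasis' (X ∩ N.E)
    have hXNmrk := mrk_le_ncard (M := N) hXN
    -- pad `J` with as many further elements of `X ∩ N.E` as the rank-lack of `X ∩ M.E` allows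
    obtain ⟨K, hJK, hKX, hK⟩ := exists_subsuperset_card_eq hJ.subset
      (n := mrk N (X ∩ N.E) + min ((X ∩ N.E).ncard - mrk N (X ∩ N.E))
        (mrk M M.E - mrk M (X ∩ M.E))) (by rw [hJ.ncard_eq_mrk]; omega) (by omega)
    have hIE : I ⊆ M.E := hI.subset.trans inter_subset_right
    have hKE : K ⊆ N.E := hKX.trans inter_subset_right
    have hAM : (I ∪ K) ∩ M.E = I := by tauto_set
    have hAN : (I ∪ K) ∩ N.E = K := by tauto_set
    have hKmrk : mrk N K = mrk N (X ∩ N.E) :=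
      le_antisymm (mrk_mono hKX) (hJ.ncard_eq_mrk ▸ hJ.indep.ncard_le_mrk hJK)
    have hAE : I ∪ K ⊆ L.E := hL.1 ▸ union_subset_union hIE hKE
    have hA : L.Indep (I ∪ K) := by
      refine hL.indep_iff.2 ⟨hAE, by rw [hAM]; exact hI.indep, ?_⟩
      rw [hAM, hAN, hKmrk, hI.indep.mrk_eq_ncard, hI.ncard_eq_mrk, hK]
      have := mrk_le_mrk_ground (M := M) (X ∩ M.E)
      omega
    have hAX : I ∪ K ⊆ X :=
      union_subset (hI.subset.trans inter_subset_left) (hKX.trans inter_subset_left)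
    have := hA.ncard_le_mrk hAX
    rw [hL.ncard_eq_ncard_inter_add_ncard_inter hMN hAE, hAM, hAN, hI.ncard_eq_mrk, hK] at this
    omega

lemma spanning_iff (hL : L.IsFreeProduct M N) (hMN : Disjoint M.E N.E) (hX : X ⊆ L.E) :
    L.Spanning X ↔ N.Spanning (X ∩ N.E) ∧
      mrk M M.E + mrk N N.E ≤ mrk M (X ∩ M.E) + (X ∩ N.E).ncard := by
  have := hL.finite
  have hN := mrk_le_ncard (M := N) N.ground_finite
  have hXN := mrk_le_mrk_ground (M := N) (X ∩ N.E)
  have hLE := hL.mrk_eq hMN L.E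
  rw [hL.1, union_inter_cancel_left, union_inter_cancel_right] at hLE
  rw [spanning_iff_mrk_eq hX, spanning_iff_mrk_eq inter_subset_right, hL.mrk_eq hMN, hL.1, hLE]
  omega

lemma dual_indep_iff (hL : L.IsFreeProduct M N) (hMN : Disjoint M.E N.E) {I : Set α} :
    L✶.Indep I ↔ I ⊆ L.E ∧ N✶.Indep (I ∩ N.E) ∧
      mrk M M.E + mrk N N.E ≤ mrk M (M.E \ I) + (N.E \ I).ncard := by
  wlog hI : I ⊆ L.E
  · exact iff_of_false (fun h ↦ hI h.subset_ground) (fun h ↦ hI h.1)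
  have hcompl : (L.E \ I) ∩ M.E = M.E \ I ∧ (L.E \ I) ∩ N.E = N.E \ I := by
    rw [hL.1]; constructor <;> tauto_set
  rw [← coindep_def, coindep_iff_compl_spanning hI, hL.spanning_iff hMN sdiff_subset, hcompl.1,
    hcompl.2, ← coindep_def, coindep_iff_compl_spanning inter_subset_right,
    sdiff_inter_self_eq_sdiff, and_iff_right hI]

lemma dual_eq (hL : L.IsFreeProduct M N) (hL' : L'.IsFreeProduct N✶ M✶)
    (hMN : Disjoint M.E N.E) : L✶ = L' := by
  have hE : L✶.E = L'.E := by rw [dual_ground, hL.1, hL'.1, dual_ground, dual_ground, union_comm]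
  refine ext_indep hE fun I hI ↦ ?_
  have hIL : I ⊆ L.E := hI
  have hIL' : I ⊆ L'.E := hE ▸ hI
  rw [hL.dual_indep_iff hMN, hL'.indep_iff, and_iff_right hIL, and_iff_right hIL']
  simp only [dual_ground]
  refine and_congr_right fun hIN ↦ ?_
  have hdualM := mrk_dual_add_mrk_ground (M := M) (X := I ∩ M.E) inter_subset_right
  have hdualN := mrk_dual_add_mrk_ground (M := N) (X := N.E) subset_rfl
  rw [sdiff_inter_self_eq_sdiff] at hdualM
  rw [sdiff_self, mrk_empty] at hdualN
  have hsplitN := ncard_inter_add_ncard_sdiff_eq_ncard N.E I N.ground_finite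
  rw [inter_comm N.E I] at hsplitN
  rw [hIN.mrk_eq_ncard]
  omega

end IsFreeProduct

end Matroid

/-- Duality: `(M □ N)✶ = N✶ □ M✶`.  Here `L` is the free product `M □ N` and `L'` is the
free product `N✶ □ M✶` (recall `M✶.E = S` and `N✶.E = T`). -/
theorem stmt_5 {α : Type*} (M N : Matroid α) (S T : Set α)
    (hS : S.Finite) (hT : T.Finite) (hMS : M.E = S) (hNT : N.E = T)
    (hST : Disjoint S T)
    (L : Matroid α) (hLE : L.E = S ∪ T)
    (hLI : ∀ A : Set α, L.Indep A ↔ A ⊆ S ∪ T ∧ M.Indep (A ∩ S) ∧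
      (A ∩ T).ncard - mrk N (A ∩ T) ≤ mrk M S - mrk M (A ∩ S))
    (L' : Matroid α) (hL'E : L'.E = T ∪ S)
    (hL'I : ∀ A : Set α, L'.Indep A ↔ A ⊆ T ∪ S ∧ N✶.Indep (A ∩ T) ∧
      (A ∩ S).ncard - mrk M✶ (A ∩ S) ≤ mrk N✶ T - mrk N✶ (A ∩ T)) :
    L✶ = L' := by
  subst hMS hNT
  have : M.Finite := ⟨hS⟩
  have : N.Finite := ⟨hT⟩
  exact IsFreeProduct.dual_eq ⟨hLE, hLI⟩ ⟨hL'E, hL'I⟩ hST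
end

section
/- Let M and N be matroids with finite disjoint ground sets S and T, let L be the free product M □ N, and let U ⊆ S ∪ T with |U| = |S|. Suppose every element of V ∩ S is an isthmus (coloop) of M, where V = (S ∪ T) \ U. Then the bases of the restriction L|U are exactly the sets of the form A ∪ (U ∩ T), where A is a basis of the restriction M|(U ∩ S). -/
/-!
Write `X = U ∩ S`, `Y = U ∩ T` and `C = S \ U`; from `|U| = |S|` we get `|Y| = |C|`. Since `C`
consists of isthmuses, `A ∪ C` is independent in `M` for every independent `A ⊆ X`, so the
rank-lack of `A` is at least `|C| = |Y| ≥ ν_N(Y)` and `A ∪ Y` is independent in `M □ N`. Every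
independent set of `(M □ N)|U` meets `S` in an independent set of `M|X` and `T` inside `Y`, hence
the maximal ones are exactly the sets `A ∪ Y` with `A` a basis of `M|X`.
-/

open Set Matroid

/-- A loop of a matroid `N` is an element contained in no independent set of `N`. -/
def IsLoopOf {α : Type*} (N : Matroid α) (e : α) : Prop := ∀ I, N.Indep I → e ∉ I

/-- An isthmus (coloop) of a matroid `M` is an element contained in every basis of `M`. -/
def IsIsthmusOf {α : Type*} (M : Matroid α) (e : α) : Prop := ∀ B, M.IsBase B → e ∈ B

section

variable {α : Type*}

lemma IsIsthmusOf.isColoop {M : Matroid α} {e : α} (he : IsIsthmusOf M e) : M.IsColoop e :=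
  isColoop_iff_forall_mem_isBase.2 fun B hB ↦ he B hB

lemma mrk_le_ncard (M : Matroid α) {X : Set α} (hX : X.Finite) : mrk M X ≤ X.ncard :=
  csSup_le' (by rintro n ⟨I, ⟨_, hIX⟩, rfl⟩; exact ncard_le_ncard hIX hX)

lemma Matroid.Indep.ncard_le_mrk_s9 {M : Matroid α} {I X : Set α} (hI : M.Indep I) (hIX : I ⊆ X)
    (hX : X.Finite) : I.ncard ≤ mrk M X :=
  le_csSup ⟨X.ncard, by rintro n ⟨J, ⟨_, hJX⟩, rfl⟩; exact ncard_le_ncard hJX hX⟩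
    ⟨I, ⟨hI, hIX⟩, rfl⟩

lemma Matroid.Indep.ncard_add_ncard_le_mrk {M : Matroid α} {A C X : Set α} (hA : M.Indep A)
    (hC : C ⊆ M.coloops) (hAC : Disjoint A C) (hAX : A ⊆ X) (hCX : C ⊆ X) (hX : X.Finite) :
    A.ncard + C.ncard ≤ mrk M X := by
  rw [← ncard_union_eq hAC (hX.subset hAX) (hX.subset hCX)]
  exact ((union_indep_iff_indep_of_subset_coloops hC).2 hA).ncard_le_mrk_s9 (union_subset hAX hCX) hX

/-- `L` is the free product `M □ N` of `M` on `S` and `N` on `T`. -/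
def IsFreeProduct (M N L : Matroid α) (S T : Set α) : Prop :=
  ∀ A : Set α, L.Indep A ↔ A ⊆ S ∪ T ∧ M.Indep (A ∩ S) ∧
    (A ∩ T).ncard - mrk N (A ∩ T) ≤ mrk M S - mrk M (A ∩ S)

namespace IsFreeProduct

variable {M N L : Matroid α} {S T : Set α}

lemma indep_inter_left (h : IsFreeProduct M N L S T) {B : Set α} (hB : L.Indep B) :
    M.Indep (B ∩ S) :=
  ((h B).1 hB).2.1

/-- Since the nullity of `Y` is at most `|Y|`, it suffices that `|Y|` fits into the rank-lack
of `A`. -/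
lemma indep_union (h : IsFreeProduct M N L S T) (hST : Disjoint S T) (hS : S.Finite)
    {A Y : Set α} (hA : M.Indep A) (hAS : A ⊆ S) (hYT : Y ⊆ T)
    (hcard : A.ncard + Y.ncard ≤ mrk M S) : L.Indep (A ∪ Y) := by
  have hAS' : (A ∪ Y) ∩ S = A := by
    rw [union_inter_distrib_right, inter_eq_self_of_subset_left hAS,
      (hST.symm.mono_left hYT).inter_eq, union_empty]
  have hYT' : (A ∪ Y) ∩ T = Y := by
    rw [union_inter_distrib_right, (hST.mono_left hAS).inter_eq,
      inter_eq_self_of_subset_left hYT, empty_union]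
  rw [h, hAS', hYT']
  refine ⟨union_subset_union hAS hYT, hA, ?_⟩
  have := mrk_le_ncard M (hS.subset hAS)
  omega

end IsFreeProduct

theorem Matroid.isBase_iff_exists_isBase_union {K P : Matroid α} {Y : Set α}
    (hE : K.E = P.E ∪ Y) (hdisj : Disjoint P.E Y)
    (hinter : ∀ I, K.Indep I → P.Indep (I ∩ P.E)) (hunion : ∀ I, P.Indep I → K.Indep (I ∪ Y))
    {B : Set α} : K.IsBase B ↔ ∃ A, P.IsBase A ∧ B = A ∪ Y := by
  have forward : ∀ B, K.IsBase B → ∃ A, P.IsBase A ∧ B = A ∪ Y := by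
    intro B hB
    obtain ⟨A, hA, hBA⟩ := (hinter B hB.indep).exists_isBase_superset
    refine ⟨A, hA, hB.eq_of_subset_indep (hunion A hA.indep) fun e he ↦ ?_⟩
    obtain hP | hY := hE ▸ hB.subset_ground he
    exacts [Or.inl (hBA ⟨he, hP⟩), Or.inr hY]
  refine ⟨forward B, ?_⟩
  rintro ⟨A, hA, rfl⟩
  obtain ⟨B', hB', hAB'⟩ := (hunion A hA.indep).exists_isBase_superset
  obtain ⟨A', hA', rfl⟩ := forward B' hB'
  have hAA' : A ⊆ A' := fun e he ↦ (hAB' (Or.inl he)).resolve_right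
    (hdisj.notMem_of_mem_left (hA.subset_ground he))
  rwa [hA.eq_of_subset_isBase hA' hAA']

end

theorem stmt_9_general {α : Type*} (M N : Matroid α) (S T : Set α)
    (hS : S.Finite) (hT : T.Finite)
    (hST : Disjoint S T)
    (L : Matroid α)
    (hLI : ∀ A : Set α, L.Indep A ↔ A ⊆ S ∪ T ∧ M.Indep (A ∩ S) ∧
      (A ∩ T).ncard - mrk N (A ∩ T) ≤ mrk M S - mrk M (A ∩ S))
    (U : Set α) (hU : U ⊆ S ∪ T) (hUcard : U.ncard = S.ncard)
    (hVS : ∀ e ∈ ((S ∪ T) \ U) ∩ S, IsIsthmusOf M e) :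
    ∀ B : Set α, (L ↾ U).IsBase B ↔ ∃ A, (M ↾ (U ∩ S)).IsBase A ∧ B = A ∪ (U ∩ T) := by
  have hfree : IsFreeProduct M N L S T := hLI
  have hUT : U ∩ T = U \ S := by
    ext e
    exact ⟨fun h ↦ ⟨h.1, hST.notMem_of_mem_right h.2⟩,
      fun h ↦ ⟨h.1, (hU h.1).resolve_left h.2⟩⟩
  have hcard : (U ∩ T).ncard = (S \ U).ncard := by
    rw [hUT, ← ncard_eq_ncard_iff_ncard_sdiff_eq_ncard_sdiff ((hS.union hT).subset hU) hS]
    exact hUcard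
  have hcoloops : S \ U ⊆ M.coloops := fun e he ↦
    (hVS e ⟨⟨Or.inl he.1, he.2⟩, he.1⟩).isColoop
  intro B
  refine isBase_iff_exists_isBase_union (by simp [← inter_union_distrib_left, hU])
    (by simpa using hST.mono inter_subset_right inter_subset_right) (fun I hI ↦ ?_) fun A hA ↦ ?_
  · rw [restrict_indep_iff] at hI ⊢
    exact ⟨(hfree.indep_inter_left hI.1).subset (inter_subset_inter_right _ inter_subset_right),
      inter_subset_right⟩
  · obtain ⟨hA, hAUS⟩ := restrict_indep_iff.1 hA
    have hAS : A ⊆ S := hAUS.trans inter_subset_right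
    refine restrict_indep_iff.2 ⟨hfree.indep_union hST hS hA hAS inter_subset_right ?_,
      union_subset (hAUS.trans inter_subset_left) inter_subset_left⟩
    rw [hcard]
    exact hA.ncard_add_ncard_le_mrk hcoloops
      (disjoint_sdiff_right.mono_left (hAUS.trans inter_subset_left)) hAS sdiff_subset hS

/-- Let `L = M □ N`, `U ⊆ S ∪ T` with `|U| = |S|`, and suppose every element of
`V ∩ S` is an isthmus of `M`, where `V = (S ∪ T) \ U`.  Then the bases of `L|U` are
exactly the sets `A ∪ (U ∩ T)` where `A` is a basis of `M|(U ∩ S)`. -/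
theorem stmt_9 {α : Type*} (M N : Matroid α) (S T : Set α)
    (hS : S.Finite) (hT : T.Finite) (hMS : M.E = S) (hNT : N.E = T)
    (hST : Disjoint S T)
    (L : Matroid α) (hLE : L.E = S ∪ T)
    (hLI : ∀ A : Set α, L.Indep A ↔ A ⊆ S ∪ T ∧ M.Indep (A ∩ S) ∧
      (A ∩ T).ncard - mrk N (A ∩ T) ≤ mrk M S - mrk M (A ∩ S))
    (U : Set α) (hU : U ⊆ S ∪ T) (hUcard : U.ncard = S.ncard)
    (hVS : ∀ e ∈ ((S ∪ T) \ U) ∩ S, IsIsthmusOf M e) :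
    ∀ B : Set α, (L ↾ U).IsBase B ↔ ∃ A, (M ↾ (U ∩ S)).IsBase A ∧ B = A ∪ (U ∩ T) :=
  stmt_9_general M N S T hS hT hST L hLI U hU hUcard hVS
end
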